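/- arXiv:1006.4780 — 2 statements merged into one kernel-verified Lean document; each statement's English description precedes it below -/
import Mathlib

section
/- Let ι be a finite index type, let n : ι → ℕ with n_i ≥ 1 for all i, and let m ≥ 0. Let S := (Σ i : ι, Fin (n_i)) ⊕ Fin m and work in the free abelian group ℤ^S with standard basis (e_x)_{x ∈ S}. Define L₁ to be the subgroup generated by {e_{inl(i,k)} - e_{inl(i,l)} : i ∈ ι, k ≠ l} ∪ {e_{inr(k)} - e_{inr(l)} : k ≠ l} ∪ {e_{inr(k)} + e_{inr(l)} : k ≠ l} ∪ {e_{inr(k)} : k ∈ Fin m}, and L₂ to be the subgroup generated by the same set with the last family replaced by {2·e_{inr(k)} : k ∈ Fin m}. Then L₂ ⊆ L₁; if m = 0 then L₂ = L₁; and if m ≥ 1 then L₂ has index 2 in L₁. -/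
/-!
`L₁ = L₂ + ℤ e_{k₀}` for any `k₀ : Fin m`, because `e_k - e_{k₀}` is a generator common to both
lattices. The parity of the sum of the `Fin m`-coordinates is a character `ℤ^S → ℤ/2` that kills
every generator of `L₂` (including `e_k + e_l` and `2 e_k`) but takes the value `1` on `e_{k₀}`.
Hence `L₂` is exactly the kernel of this character restricted to `L₁`, which has index `2`.
-/

namespace AddSubgroup

variable {M K : Type*} [AddCommGroup M] (B : Set M) (e : K → M)

theorem closure_union_range_two_smul_le :
    closure (B ∪ Set.range fun k => (2 : ℤ) • e k) ≤ closure (B ∪ Set.range e) := by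
  refine (closure_le _).mpr ?_
  rintro w (hw | ⟨k, rfl⟩)
  · exact subset_closure (Or.inl hw)
  · have hk : e k ∈ closure (B ∪ Set.range e) := subset_closure (Or.inr ⟨k, rfl⟩)
    exact zsmul_mem hk 2

variable {B e}

theorem closure_union_range_le_sup_zmultiples {k₀ : K} (hdiff : ∀ k, e k - e k₀ ∈ closure B) :
    closure (B ∪ Set.range e) ≤ closure B ⊔ zmultiples (e k₀) := by
  refine (closure_le _).mpr ?_
  rintro w (hw | ⟨k, rfl⟩)
  · exact mem_sup_left (subset_closure hw)
  · rw [← sub_add_cancel (e k) (e k₀)]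
    exact add_mem (mem_sup_left (hdiff k)) (mem_sup_right (mem_zmultiples _))

theorem closure_union_range_two_smul_eq_inf_ker (φ : M →+ ZMod 2) (hB : ∀ b ∈ B, φ b = 0)
    (he : ∀ k, φ (e k) = 1) {k₀ : K} (hdiff : ∀ k, e k - e k₀ ∈ closure B) :
    closure (B ∪ Set.range fun k => (2 : ℤ) • e k) = closure (B ∪ Set.range e) ⊓ φ.ker := by
  set H := closure (B ∪ Set.range fun k => (2 : ℤ) • e k)
  have hHker : H ≤ φ.ker := by
    refine (closure_le _).mpr ?_
    rintro w (hw | ⟨k, rfl⟩)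
    · exact hB w hw
    · change φ ((2 : ℤ) • e k) = 0
      rw [map_zsmul, he, zsmul_one]
      decide
  refine le_antisymm (le_inf (closure_union_range_two_smul_le B e) hHker) ?_
  intro x hxG
  obtain ⟨hx, hφx⟩ := mem_inf.mp hxG
  obtain ⟨y, hy, z, hz, rfl⟩ := mem_sup.mp (closure_union_range_le_sup_zmultiples hdiff hx)
  obtain ⟨c, rfl⟩ := mem_zmultiples_iff.mp hz
  have hyH : y ∈ H := closure_mono Set.subset_union_left hy
  -- `φ (y + c • e k₀) = c mod 2`, so `c` is even and `c • e k₀` is a multiple of `2 • e k₀ ∈ H`.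
  have hc : ((c : ℤ) : ZMod 2) = 0 := by
    rwa [AddMonoidHom.mem_ker, map_add, hHker hyH, zero_add, map_zsmul, he, zsmul_one] at hφx
  obtain ⟨d, rfl⟩ := (ZMod.intCast_zmod_eq_zero_iff_dvd c 2).mp hc
  have h2e : (2 : ℤ) • e k₀ ∈ H := subset_closure (Or.inr ⟨k₀, rfl⟩)
  rw [Nat.cast_ofNat, mul_comm, mul_zsmul]
  exact add_mem hyH (zsmul_mem h2e d)

theorem relIndex_closure_union_range_two_smul (φ : M →+ ZMod 2) (hB : ∀ b ∈ B, φ b = 0)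
    (he : ∀ k, φ (e k) = 1) {k₀ : K} (hdiff : ∀ k, e k - e k₀ ∈ closure B) :
    (closure (B ∪ Set.range fun k => (2 : ℤ) • e k)).relIndex (closure (B ∪ Set.range e)) = 2 := by
  have hsurj : (closure (B ∪ Set.range e)).map φ = ⊤ := by
    refine eq_top_iff.mpr fun z _ => ?_
    obtain ⟨c, rfl⟩ := ZMod.intCast_surjective z
    have h1 : (1 : ZMod 2) ∈ (closure (B ∪ Set.range e)).map φ :=
      ⟨e k₀, subset_closure (Or.inr ⟨k₀, rfl⟩), he k₀⟩
    simpa using zsmul_mem h1 c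
  rw [closure_union_range_two_smul_eq_inf_ker φ hB he hdiff, inf_comm, inf_relIndex_right,
    relIndex_ker, hsurj, card_top, Nat.card_zmod]

end AddSubgroup

section InrParity

variable (A K : Type*) [Fintype K]

def inrParity : ((A ⊕ K) → ℤ) →+ ZMod 2 :=
  ∑ k : K, (Int.castAddHom (ZMod 2)).comp (Pi.evalAddMonoidHom (fun _ => ℤ) (Sum.inr k))

variable {A K} [DecidableEq A] [DecidableEq K]

@[simp]
theorem inrParity_single_inl (a : A) : inrParity A K (Pi.single (Sum.inl a) 1) = 0 := by
  simp [inrParity]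

@[simp]
theorem inrParity_single_inr (k : K) : inrParity A K (Pi.single (Sum.inr k) 1) = 1 := by
  simp [inrParity, Pi.single_apply]

end InrParity

theorem levi_coroot_lattice_index_general {ι : Type*} [DecidableEq ι]
    (n : ι → ℕ) (m : ℕ) :
    ∀ (base : Set (((Σ i : ι, Fin (n i)) ⊕ Fin m) → ℤ)),
      base =
        ({w | ∃ (i : ι) (k l : Fin (n i)), k ≠ l ∧
            w = Pi.single (Sum.inl ⟨i, k⟩) 1 - Pi.single (Sum.inl ⟨i, l⟩) 1} ∪
         {w | ∃ k l : Fin m, k ≠ l ∧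
            w = Pi.single (Sum.inr k) 1 - Pi.single (Sum.inr l) 1} ∪
         {w | ∃ k l : Fin m, k ≠ l ∧
            w = Pi.single (Sum.inr k) 1 + Pi.single (Sum.inr l) 1}) →
      ∀ (L₁ L₂ : AddSubgroup (((Σ i : ι, Fin (n i)) ⊕ Fin m) → ℤ)),
        L₁ = AddSubgroup.closure
          (base ∪ {w | ∃ k : Fin m, w = Pi.single (Sum.inr k) 1}) →
        L₂ = AddSubgroup.closure
          (base ∪ {w | ∃ k : Fin m, w = (2 : ℤ) • Pi.single (Sum.inr k) 1}) →
        L₂ ≤ L₁ ∧ (m = 0 → L₂ = L₁) ∧ (1 ≤ m → L₂.relIndex L₁ = 2) := by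
  intro base hbase L₁ L₂ h₁ h₂
  set e : Fin m → ((Σ i : ι, Fin (n i)) ⊕ Fin m) → ℤ := fun k => Pi.single (Sum.inr k) 1
  have hrange : ∀ f : Fin m → ((Σ i : ι, Fin (n i)) ⊕ Fin m) → ℤ,
      {w | ∃ k, w = f k} = Set.range f :=
    fun f => Set.ext fun _ => exists_congr fun _ => eq_comm
  rw [hrange] at h₁ h₂
  subst h₁ h₂
  refine ⟨AddSubgroup.closure_union_range_two_smul_le base e, ?_, fun hm => ?_⟩
  · rintro rfl
    rw [Set.range_eq_empty, Set.range_eq_empty]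
  have hB : ∀ b ∈ base, inrParity _ _ b = 0 := by
    subst hbase
    rintro b (((⟨i, k, l, -, rfl⟩ | ⟨k, l, -, rfl⟩) | ⟨k, l, -, rfl⟩))
    · simp
    · simp
    · rw [map_add, inrParity_single_inr, inrParity_single_inr]
      rfl
  have hdiff : ∀ k, e k - e ⟨0, hm⟩ ∈ AddSubgroup.closure base := by
    intro k
    by_cases hk : k = ⟨0, hm⟩
    · rw [hk, sub_self]
      exact zero_mem _
    · exact AddSubgroup.subset_closure (hbase ▸ Or.inl (Or.inr ⟨k, _, hk, rfl⟩))
  exact AddSubgroup.relIndex_closure_union_range_two_smul _ hB inrParity_single_inr hdiff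

/-- Let `ι` be a finite index type, `n : ι → ℕ` with `n i ≥ 1`, and `m ≥ 0`.
Let `S := (Σ i, Fin (n i)) ⊕ Fin m` and let `e x = Pi.single x 1` be the standard basis of
`ℤ^S = (S → ℤ)`.  Let `L₁` be the subgroup generated by the differences of basis vectors
within each `GL`-block, together with `e (inr k) - e (inr l)`, `e (inr k) + e (inr l)`
(`k ≠ l`) and `e (inr k)` (the coroot lattice of the Levi `M₁ = ∏ GL(n i) × Sp(2m)`), and
let `L₂` be generated by the same set with the last family replaced by `2 • e (inr k)`
(the coroot lattice of the corresponding Levi `M₂` of `Spin(2n+1)`).  Then `L₂ ⊆ L₁`;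
if `m = 0` then `L₂ = L₁`; and if `m ≥ 1` then `L₂` has index `2` in `L₁`. -/
theorem levi_coroot_lattice_index {ι : Type*} [Fintype ι] [DecidableEq ι]
    (n : ι → ℕ) (hn : ∀ i, 1 ≤ n i) (m : ℕ) :
    ∀ (base : Set (((Σ i : ι, Fin (n i)) ⊕ Fin m) → ℤ)),
      base =
        ({w | ∃ (i : ι) (k l : Fin (n i)), k ≠ l ∧
            w = Pi.single (Sum.inl ⟨i, k⟩) 1 - Pi.single (Sum.inl ⟨i, l⟩) 1} ∪
         {w | ∃ k l : Fin m, k ≠ l ∧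
            w = Pi.single (Sum.inr k) 1 - Pi.single (Sum.inr l) 1} ∪
         {w | ∃ k l : Fin m, k ≠ l ∧
            w = Pi.single (Sum.inr k) 1 + Pi.single (Sum.inr l) 1}) →
      ∀ (L₁ L₂ : AddSubgroup (((Σ i : ι, Fin (n i)) ⊕ Fin m) → ℤ)),
        L₁ = AddSubgroup.closure
          (base ∪ {w | ∃ k : Fin m, w = Pi.single (Sum.inr k) 1}) →
        L₂ = AddSubgroup.closure
          (base ∪ {w | ∃ k : Fin m, w = (2 : ℤ) • Pi.single (Sum.inr k) 1}) →
        L₂ ≤ L₁ ∧ (m = 0 → L₂ = L₁) ∧ (1 ≤ m → L₂.relIndex L₁ = 2) :=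
  levi_coroot_lattice_index_general n m
end

section
/- Let ι be a finite index type, n : ι → ℕ with n_i ≥ 1 for all i, m ≥ 0, and assume S := (Σ i : ι, Fin (n_i)) ⊕ Fin m is nonempty. In the free abelian group ℤ^S with standard basis (e_x), define the ambient lattices L₁^G := the subgroup generated by {e_x - e_y : x ≠ y} ∪ {e_x + e_y : x ≠ y} ∪ {e_x : x ∈ S} (which equals all of ℤ^S) and L₂^G := the subgroup generated by {e_x - e_y : x ≠ y} ∪ {e_x + e_y : x ≠ y} ∪ {2·e_x : x ∈ S}; define the Levi lattices L₁^M, L₂^M as the subgroups generated by the corresponding block-restricted sets: {e_{inl(i,k)} - e_{inl(i,l)} : i ∈ ι, k ≠ l} together with {e_{inr(k)} ± e_{inr(l)} : k ≠ l} and {e_{inr(k)}} (resp. {2·e_{inr(k)}}) for L₁^M (resp. L₂^M). Then the rational number ([L₁^M : L₂^M]) / ([L₁^G : L₂^G]) equals 1 if m ≥ 1 and equals 1/2 if m = 0; that is, the non-standard endoscopic coefficient c^{G₁,G₂}_{M₁,M₂} = [R₂^Γ : j_*(R₁^Γ)]/[R^{M₂,Γ} : j_*(R^{M₁,Γ})]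 equals 1 if m ≠ 0 and 1/2 if m = 0. -/
/-!
The parity of the coordinate sum, `ℤ^S → ℤ/2`, kills every generator `e_x ± e_y` and `2 e_x`
of the `Spin(2n+1)` lattices, while `e_x` maps to `1`. Hence whenever the `Sp` lattice
contains some `e_x`, it is the `Spin` lattice plus `ℤ e_x`, and the `Spin` lattice is exactly
its even part, of index `2`. This applies to `G` always and to `M` as soon as `m ≥ 1`; for
`m = 0` the two Levi lattices coincide.
-/

namespace AddSubgroup

variable {A : Type*} [AddCommGroup A]

theorem relIndex_sup_zmultiples_eq_two {K : AddSubgroup A} {a : A} (f : A →+ ZMod 2)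
    (hK : K ≤ f.ker) (ha : f a = 1) (h2a : (2 : ℤ) • a ∈ K) :
    K.relIndex (K ⊔ zmultiples a) = 2 := by
  have heven : (K ⊔ zmultiples a) ⊓ f.ker = K := by
    refine le_antisymm (fun w ⟨hw, hfw⟩ => ?_) (le_inf le_sup_left hK)
    obtain ⟨k, hk, z, hz, rfl⟩ := mem_sup.mp hw
    obtain ⟨t, rfl⟩ := mem_zmultiples_iff.mp hz
    have ht : (t : ZMod 2) = 0 := by
      simpa [AddMonoidHom.mem_ker.mp (hK hk), ha] using hfw
    obtain ⟨u, rfl⟩ : (2 : ℤ) ∣ t := by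
      exact_mod_cast (ZMod.intCast_zmod_eq_zero_iff_dvd t 2).mp ht
    rw [mul_comm, mul_smul]
    exact add_mem hk (zsmul_mem h2a u)
  have hsurj : (K ⊔ zmultiples a).map f = ⊤ := by
    refine eq_top_iff.mpr fun c _ => ?_
    obtain ⟨t, rfl⟩ := ZMod.intCast_surjective c
    refine ⟨t • a, zsmul_mem (mem_sup_right (mem_zmultiples a)) t, ?_⟩
    simp [ha]
  have hindex := inf_relIndex_left (K ⊔ zmultiples a) f.ker
  rw [heven] at hindex
  rw [hindex, relIndex_ker, hsurj, card_top, Nat.card_zmod]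

theorem relIndex_closure_union_two_smul_eq_two {T : Type*} (f : A →+ ZMod 2) {B : Set A}
    (hB : B ⊆ f.ker) {g : T → A} (i₀ : T) (hg : f (g i₀) = 1)
    (hdiff : ∀ i, i ≠ i₀ → g i - g i₀ ∈ B) :
    (closure (B ∪ {w | ∃ i, w = (2 : ℤ) • g i})).relIndex
      (closure (B ∪ {w | ∃ i, w = g i})) = 2 := by
  set K := closure (B ∪ {w | ∃ i, w = (2 : ℤ) • g i})
  have hBK : B ⊆ K := fun b hb => subset_closure (Or.inl hb)
  have hsup : closure (B ∪ {w | ∃ i, w = g i}) = K ⊔ zmultiples (g i₀) := by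
    refine le_antisymm ((closure_le _).mpr ?_) (sup_le ((closure_le _).mpr ?_) ?_)
    · rintro w (hb | ⟨i, rfl⟩)
      · exact mem_sup_left (hBK hb)
      · rw [← sub_add_cancel (g i) (g i₀)]
        refine add_mem (mem_sup_left ?_) (mem_sup_right (mem_zmultiples _))
        by_cases hi : i = i₀
        · simp [hi]
        · exact hBK (hdiff i hi)
    · rintro w (hb | ⟨i, rfl⟩)
      · exact subset_closure (Or.inl hb)
      · exact zsmul_mem (subset_closure (Or.inr ⟨i, rfl⟩) :
          g i ∈ closure (B ∪ {w | ∃ i, w = g i})) 2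
    · exact zmultiples_le.mpr (subset_closure (Or.inr ⟨i₀, rfl⟩))
  have hKker : K ≤ f.ker := by
    refine (closure_le _).mpr (Set.union_subset hB ?_)
    rintro _ ⟨i, rfl⟩
    rw [SetLike.mem_coe, AddMonoidHom.mem_ker, map_zsmul, CharTwo.two_zsmul]
  rw [hsup]
  exact relIndex_sup_zmultiples_eq_two f hKker hg (subset_closure (Or.inr ⟨i₀, rfl⟩))

end AddSubgroup

def coordParity (S : Type*) [Fintype S] : (S → ℤ) →+ ZMod 2 :=
  ∑ x : S, (Int.castAddHom (ZMod 2)).comp (Pi.evalAddMonoidHom (fun _ => ℤ) x)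

section CoordinateParity

variable {S : Type*} [Fintype S] [DecidableEq S]

@[simp]
theorem coordParity_single (x : S) (c : ℤ) : coordParity S (Pi.single x c) = c := by
  simp [coordParity, Pi.single_apply]

theorem closure_setOf_single_eq_top :
    AddSubgroup.closure {w : S → ℤ | ∃ x, w = Pi.single x 1} = ⊤ := by
  have hspan := (Pi.basisFun ℤ S).span_eq
  rw [← Submodule.span_int_eq_addSubgroupClosure]
  simpa [Pi.basisFun_apply, Set.range, eq_comm] using congrArg Submodule.toAddSubgroup hspan

end CoordinateParity

theorem nonstandard_endoscopic_coefficient_general {ι : Type*} [Fintype ι] [DecidableEq ι]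
    (n : ι → ℕ) (m : ℕ)
    (hS : Nonempty ((Σ i : ι, Fin (n i)) ⊕ Fin m)) :
    ∀ (baseG baseM : Set (((Σ i : ι, Fin (n i)) ⊕ Fin m) → ℤ)),
      baseG =
        ({w | ∃ x y : (Σ i : ι, Fin (n i)) ⊕ Fin m, x ≠ y ∧
            w = Pi.single x 1 - Pi.single y 1} ∪
         {w | ∃ x y : (Σ i : ι, Fin (n i)) ⊕ Fin m, x ≠ y ∧
            w = Pi.single x 1 + Pi.single y 1}) →
      baseM =
        ({w | ∃ (i : ι) (k l : Fin (n i)), k ≠ l ∧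
            w = Pi.single (Sum.inl ⟨i, k⟩) 1 - Pi.single (Sum.inl ⟨i, l⟩) 1} ∪
         {w | ∃ k l : Fin m, k ≠ l ∧
            w = Pi.single (Sum.inr k) 1 - Pi.single (Sum.inr l) 1} ∪
         {w | ∃ k l : Fin m, k ≠ l ∧
            w = Pi.single (Sum.inr k) 1 + Pi.single (Sum.inr l) 1}) →
      ∀ (L₁G L₂G L₁M L₂M : AddSubgroup (((Σ i : ι, Fin (n i)) ⊕ Fin m) → ℤ)),
        L₁G = AddSubgroup.closure
          (baseG ∪ {w | ∃ x : (Σ i : ι, Fin (n i)) ⊕ Fin m, w = Pi.single x 1}) →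
        L₂G = AddSubgroup.closure
          (baseG ∪ {w | ∃ x : (Σ i : ι, Fin (n i)) ⊕ Fin m,
            w = (2 : ℤ) • Pi.single x 1}) →
        L₁M = AddSubgroup.closure
          (baseM ∪ {w | ∃ k : Fin m, w = Pi.single (Sum.inr k) 1}) →
        L₂M = AddSubgroup.closure
          (baseM ∪ {w | ∃ k : Fin m, w = (2 : ℤ) • Pi.single (Sum.inr k) 1}) →
        L₁G = ⊤ ∧
        ((L₂M.relIndex L₁M : ℚ) / (L₂G.relIndex L₁G : ℚ) =
          if m = 0 then 1 / 2 else 1) := by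
  rintro baseG baseM hbaseG hbaseM L₁G L₂G L₁M L₂M rfl rfl rfl rfl
  obtain ⟨x₀⟩ := hS
  have hG := AddSubgroup.relIndex_closure_union_two_smul_eq_two (coordParity _) (B := baseG)
    (g := (Pi.single · 1))
    (by
      subst hbaseG
      rintro _ (⟨x, y, -, rfl⟩ | ⟨x, y, -, rfl⟩) <;> simp [CharTwo.add_self_eq_zero])
    x₀ (by simp) (by subst hbaseG; exact fun x hx => Or.inl ⟨x, x₀, hx, rfl⟩)
  refine ⟨top_unique (closure_setOf_single_eq_top.symm.le.trans
    (AddSubgroup.closure_mono Set.subset_union_right)), ?_⟩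
  rw [hG]
  rcases eq_or_ne m 0 with rfl | hm
  · simp only [IsEmpty.exists_iff, Set.ofPred_false, Set.union_empty, AddSubgroup.relIndex_self]
    norm_num
  · have hM := AddSubgroup.relIndex_closure_union_two_smul_eq_two (coordParity _) (B := baseM)
      (g := fun k : Fin m => Pi.single (Sum.inr k) 1)
      (by
        subst hbaseM
        rintro _ ((⟨i, k, l, -, rfl⟩ | ⟨k, l, -, rfl⟩) | ⟨k, l, -, rfl⟩) <;>
          simp [CharTwo.add_self_eq_zero])
      ⟨0, Nat.pos_of_ne_zero hm⟩ (by simp)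
      (by subst hbaseM; exact fun k hk => Or.inl (Or.inr ⟨k, _, hk, rfl⟩))
    rw [hM, if_neg hm]
    norm_num

/-- With `S := (Σ i, Fin (n i)) ⊕ Fin m` nonempty and
`e x = Pi.single x 1` the standard basis of `ℤ^S`, let `L₁G` (resp. `L₂G`) be the coroot
lattice of `G₁ = Sp(2n)` (resp. `G₂ = Spin(2n+1)`), generated by all `e x - e y`,
`e x + e y` (`x ≠ y`) and all `e x` (resp. all `2 • e x`); `L₁G` equals all of `ℤ^S`.
Let `L₁M`, `L₂M` be the coroot lattices of the corresponding Levi subgroups, generated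
by the block-restricted sets.  Then the non-standard endoscopic coefficient
`c^{G₁,G₂}_{M₁,M₂} = [L₁M : L₂M] / [L₁G : L₂G]` equals `1` if `m ≥ 1` and `1/2` if
`m = 0`. -/
theorem nonstandard_endoscopic_coefficient {ι : Type*} [Fintype ι] [DecidableEq ι]
    (n : ι → ℕ) (hn : ∀ i, 1 ≤ n i) (m : ℕ)
    (hS : Nonempty ((Σ i : ι, Fin (n i)) ⊕ Fin m)) :
    ∀ (baseG baseM : Set (((Σ i : ι, Fin (n i)) ⊕ Fin m) → ℤ)),
      baseG =
        ({w | ∃ x y : (Σ i : ι, Fin (n i)) ⊕ Fin m, x ≠ y ∧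
            w = Pi.single x 1 - Pi.single y 1} ∪
         {w | ∃ x y : (Σ i : ι, Fin (n i)) ⊕ Fin m, x ≠ y ∧
            w = Pi.single x 1 + Pi.single y 1}) →
      baseM =
        ({w | ∃ (i : ι) (k l : Fin (n i)), k ≠ l ∧
            w = Pi.single (Sum.inl ⟨i, k⟩) 1 - Pi.single (Sum.inl ⟨i, l⟩) 1} ∪
         {w | ∃ k l : Fin m, k ≠ l ∧
            w = Pi.single (Sum.inr k) 1 - Pi.single (Sum.inr l) 1} ∪
         {w | ∃ k l : Fin m, k ≠ l ∧
            w = Pi.single (Sum.inr k) 1 + Pi.single (Sum.inr l) 1}) →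
      ∀ (L₁G L₂G L₁M L₂M : AddSubgroup (((Σ i : ι, Fin (n i)) ⊕ Fin m) → ℤ)),
        L₁G = AddSubgroup.closure
          (baseG ∪ {w | ∃ x : (Σ i : ι, Fin (n i)) ⊕ Fin m, w = Pi.single x 1}) →
        L₂G = AddSubgroup.closure
          (baseG ∪ {w | ∃ x : (Σ i : ι, Fin (n i)) ⊕ Fin m,
            w = (2 : ℤ) • Pi.single x 1}) →
        L₁M = AddSubgroup.closure
          (baseM ∪ {w | ∃ k : Fin m, w = Pi.single (Sum.inr k) 1}) →
        L₂M = AddSubgroup.closure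
          (baseM ∪ {w | ∃ k : Fin m, w = (2 : ℤ) • Pi.single (Sum.inr k) 1}) →
        L₁G = ⊤ ∧
        ((L₂M.relIndex L₁M : ℚ) / (L₂G.relIndex L₁G : ℚ) =
          if m = 0 then 1 / 2 else 1) :=
  nonstandard_endoscopic_coefficient_general n m hS
end
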